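/- Let P, Q be probability distributions on a finite set and δ ∈ (0,1) with Σ_x min{P(x), Q(x)} < 1 − δ. Define P̃(x) = min{P(x), λ_P Q(x)} where λ_P > 1 is chosen so that Σ_x P̃(x) = 1 − δ, and then Q̃(x) = min{Q(x), P̃(x)/λ_Q} where λ_Q ≤ 1 is chosen so that Σ_x Q̃(x) = 1 − δ. Then for every α > 1, the pair (P̃/(1−δ), Q̃/(1−δ)) attains the infimum in the definition of D_α^δ(P‖Q); i.e., D_α^δ(P‖Q) = D_α(P̃/(1−δ) ‖ Q̃/(1−δ)). -/

import Mathlib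

open scoped ENNReal

/-- Rényi divergence of order `α` between finitely supported distributions, using the
convention `0 ^ (1-α) = ∞` for `α > 1` (so non-absolutely-continuous pairs get `⊤`). -/
noncomputable def renyiDiv {X : Type*} [Fintype X] (α : ℝ) (P Q : X → ℝ≥0∞) : EReal :=
  ((α - 1)⁻¹ : ℝ) * ENNReal.log (∑ x, P x ^ α * Q x ^ (1 - α))

/-- `P` is a probability mass function. -/
def IsPMF {X : Type*} [Fintype X] (P : X → ℝ≥0∞) : Prop := ∑ x, P x = 1

/-- δ-approximate Rényi divergence of order α. -/
noncomputable def approxRenyiDiv {X : Type*} [Fintype X] (α δ : ℝ) (P Q : X → ℝ≥0∞) :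
    EReal :=
  sInf { d : EReal | ∃ P' P'' Q' Q'' : X → ℝ≥0∞,
    IsPMF P' ∧ IsPMF P'' ∧ IsPMF Q' ∧ IsPMF Q'' ∧
    (∀ x, P x = ENNReal.ofReal (1 - δ) * P' x + ENNReal.ofReal δ * P'' x) ∧
    (∀ x, Q x = ENNReal.ofReal (1 - δ) * Q' x + ENNReal.ofReal δ * Q'' x) ∧
    d = renyiDiv α P' Q' }

/-- The Bernoulli distribution on `Bool`. -/
noncomputable def Ber (p : ℝ) : Bool → ℝ≥0∞ :=
  fun b => if b then ENNReal.ofReal p else ENNReal.ofReal (1 - p)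

lemma pmf_le_one {X : Type*} [Fintype X] {P : X → ℝ≥0∞} (hP : IsPMF P) (x : X) : P x ≤ 1 :=
  hP ▸ Finset.single_le_sum (fun i _ => zero_le) (Finset.mem_univ x)

lemma pmf_fin {X : Type*} [Fintype X] {P : X → ℝ≥0∞} (hP : IsPMF P) (x : X) : P x ≠ ⊤ :=
  ne_top_of_le_ne_top ENNReal.one_ne_top (pmf_le_one hP x)

lemma renyiDiv_mono {X : Type*} [Fintype X] {α : ℝ} (hα : 1 < α) {P Q P' Q' : X → ℝ≥0∞}
    (h : ∑ x, P x ^ α * Q x ^ (1-α) ≤ ∑ x, P' x ^ α * Q' x ^ (1-α)) :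
    renyiDiv α P Q ≤ renyiDiv α P' Q' := by
  unfold renyiDiv
  apply mul_le_mul_of_nonneg_left (ENNReal.log_monotone h)
  exact EReal.coe_nonneg.mpr (inv_nonneg.mpr (by linarith))

lemma wf_decomp {X : Type*} [Fintype X] {δ : ℝ} (hδ : δ ∈ Set.Ioo (0:ℝ) 1)
    {P : X → ℝ≥0∞} (hP : IsPMF P) (Pt : X → ℝ≥0∞) (hle : ∀ x, Pt x ≤ P x)
    (hsum : ∑ x, Pt x = ENNReal.ofReal (1 - δ)) :
    IsPMF (fun x => Pt x / ENNReal.ofReal (1 - δ)) ∧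
    IsPMF (fun x => (P x - Pt x) / ENNReal.ofReal δ) ∧
    (∀ x, P x = ENNReal.ofReal (1 - δ) * (Pt x / ENNReal.ofReal (1 - δ))
        + ENNReal.ofReal δ * ((P x - Pt x) / ENNReal.ofReal δ)) := by
  obtain ⟨hδ0, hδ1⟩ := hδ
  have hc0 : ENNReal.ofReal (1 - δ) ≠ 0 := (ENNReal.ofReal_pos.mpr (by linarith)).ne'
  have hcT : ENNReal.ofReal (1 - δ) ≠ ⊤ := ENNReal.ofReal_ne_top
  have hd0 : ENNReal.ofReal δ ≠ 0 := (ENNReal.ofReal_pos.mpr hδ0).ne'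
  have hdT : ENNReal.ofReal δ ≠ ⊤ := ENNReal.ofReal_ne_top
  have hsub : ∑ x, (P x - Pt x) = ENNReal.ofReal δ := by
    have key : ∑ x, (Pt x + (P x - Pt x)) = ∑ x, P x :=
      Finset.sum_congr rfl fun x _ => add_tsub_cancel_of_le (hle x)
    rw [Finset.sum_add_distrib, hsum, (hP : ∑ x, P x = 1)] at key
    have key2 : ENNReal.ofReal (1 - δ) + ENNReal.ofReal δ = 1 := by
      rw [← ENNReal.ofReal_add (by linarith) hδ0.le]
      norm_num
    exact (ENNReal.add_right_inj hcT).mp (key.trans key2.symm)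
  refine ⟨?_, ?_, ?_⟩
  · show (∑ x, Pt x / ENNReal.ofReal (1 - δ)) = 1
    simp only [div_eq_mul_inv, ← Finset.sum_mul, hsum]
    exact ENNReal.mul_inv_cancel hc0 hcT
  · show (∑ x, (P x - Pt x) / ENNReal.ofReal δ) = 1
    simp only [div_eq_mul_inv, ← Finset.sum_mul, hsub]
    exact ENNReal.mul_inv_cancel hd0 hdT
  · intro x
    rw [ENNReal.mul_div_cancel hc0 hcT, ENNReal.mul_div_cancel hd0 hdT,
      add_tsub_cancel_of_le (hle x)]

lemma wf_tangent {α a b r : ℝ} (hα : 1 < α) (ha : 0 ≤ a) (hb : 0 ≤ b) (hr : 0 ≤ r)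
    (hab : b = 0 → a = 0) :
    α * r ^ (α - 1) * a - (α - 1) * r ^ α * b ≤ a ^ α * b ^ (1 - α) := by
  have hα0 : (0:ℝ) < α := by linarith
  have hαne : α ≠ 0 := ne_of_gt hα0
  have hRHS : (0:ℝ) ≤ a ^ α * b ^ (1 - α) :=
    mul_nonneg (Real.rpow_nonneg ha α) (Real.rpow_nonneg hb _)
  rcases eq_or_lt_of_le hb with hb0 | hb0
  · have ha0 : a = 0 := hab hb0.symm
    subst ha0
    rw [← hb0]
    simp only [mul_zero, sub_zero, zero_mul, sub_self]
    exact mul_nonneg (Real.rpow_nonneg le_rfl α) (Real.rpow_nonneg le_rfl _)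
  rcases eq_or_lt_of_le hr with hr0 | hr0
  · rw [← hr0, Real.zero_rpow hαne,
      Real.zero_rpow (by intro h; nlinarith : α - 1 ≠ 0)]
    nlinarith
  · have key := Real.geom_mean_le_arith_mean2_weighted
      (w₁ := 1/α) (w₂ := (α-1)/α) (p₁ := a ^ α * b ^ (1-α)) (p₂ := r ^ α * b)
      (div_nonneg zero_le_one hα0.le) (div_nonneg (by linarith) hα0.le)
      hRHS (mul_nonneg (Real.rpow_nonneg hr0.le α) hb0.le)
      (by field_simp; ring)
    have e1 : (a ^ α * b ^ (1-α)) ^ (1/α) = a * b ^ ((1-α)/α) := by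
      rw [Real.mul_rpow (Real.rpow_nonneg ha α) (Real.rpow_nonneg hb0.le _),
        ← Real.rpow_mul ha, ← Real.rpow_mul hb0.le, mul_one_div, mul_one_div,
        div_self hαne, Real.rpow_one]
    have e2 : (r ^ α * b) ^ ((α-1)/α) = r ^ (α - 1) * b ^ ((α-1)/α) := by
      rw [Real.mul_rpow (Real.rpow_nonneg hr0.le α) hb0.le, ← Real.rpow_mul hr0.le,
        mul_div_cancel₀ _ hαne]
    rw [e1, e2] at key
    have e3 : a * b ^ ((1-α)/α) * (r ^ (α - 1) * b ^ ((α-1)/α)) = a * r ^ (α-1) := by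
      rw [show a * b ^ ((1-α)/α) * (r ^ (α - 1) * b ^ ((α-1)/α))
          = a * r ^ (α-1) * (b ^ ((1-α)/α) * b ^ ((α-1)/α)) by ring,
        ← Real.rpow_add hb0, show (1-α)/α + (α-1)/α = 0 by ring, Real.rpow_zero, mul_one]
    rw [e3] at key
    have key2 := mul_le_mul_of_nonneg_left key hα0.le
    calc α * r ^ (α - 1) * a - (α - 1) * r ^ α * b
        ≤ α * (1/α * (a ^ α * b ^ (1-α)) + (α-1)/α * (r ^ α * b)) - (α - 1) * r ^ α * b := by
          rw [show α * r ^ (α-1) * a = α * (a * r ^ (α-1)) by ring]; linarith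
      _ = a ^ α * b ^ (1-α) := by field_simp; ring

lemma wf_eq {α b r : ℝ} (hα : 1 < α) (hb : 0 ≤ b) (hr : 0 ≤ r) :
    (r * b) ^ α * b ^ (1 - α) = α * r ^ (α - 1) * (r * b) - (α - 1) * r ^ α * b := by
  have hαne : α ≠ 0 := by positivity
  rcases eq_or_lt_of_le hb with hb0 | hb0
  · rw [← hb0]
    simp [Real.zero_rpow hαne, Real.zero_rpow (show (1:ℝ) - α ≠ 0 by intro h; nlinarith)]
  rcases eq_or_lt_of_le hr with hr0 | hr0
  · rw [← hr0]
    simp [Real.zero_rpow hαne, Real.zero_rpow (show α - 1 ≠ 0 by intro h; nlinarith)]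
  · have h1 : (r * b) ^ α = r ^ α * b ^ α := Real.mul_rpow hr0.le hb0.le
    have h2 : b ^ α * b ^ (1 - α) = b := by
      rw [← Real.rpow_add hb0]; simp
    have h3 : r ^ (α - 1) * r = r ^ α := by
      nth_rewrite 2 [← Real.rpow_one r]
      rw [← Real.rpow_add hr0]; ring_nf
    calc (r * b) ^ α * b ^ (1-α) = r ^ α * (b ^ α * b ^ (1-α)) := by rw [h1]; ring
      _ = r ^ α * b := by rw [h2]
      _ = α * (r ^ (α-1) * r) * b - (α - 1) * r ^ α * b := by rw [h3]; ring
      _ = α * r ^ (α - 1) * (r * b) - (α - 1) * r ^ α * b := by ring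

lemma wf_sum {X : Type*} [Fintype X] {α : ℝ} (hα : 1 < α) (a b ta tb r : X → ℝ)
    (ha : ∀ x, 0 ≤ a x) (hb : ∀ x, 0 ≤ b x) (htb : ∀ x, 0 ≤ tb x) (hr : ∀ x, 0 ≤ r x)
    (hab : ∀ x, b x = 0 → a x = 0) (hta : ∀ x, ta x = r x * tb x)
    (h1 : ∑ x, r x ^ (α-1) * ta x ≤ ∑ x, r x ^ (α-1) * a x)
    (h2 : ∑ x, r x ^ α * b x ≤ ∑ x, r x ^ α * tb x) :
    ∑ x, ta x ^ α * tb x ^ (1-α) ≤ ∑ x, a x ^ α * b x ^ (1-α) := by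
  have hα0 : (0:ℝ) ≤ α := by linarith
  have e : ∀ x, ta x ^ α * tb x ^ (1-α)
      = α * (r x ^ (α-1) * ta x) - (α-1) * (r x ^ α * tb x) := fun x => by
    rw [hta x]
    have := wf_eq (b := tb x) (r := r x) hα (htb x) (hr x)
    rw [this]; ring
  calc ∑ x, ta x ^ α * tb x ^ (1-α)
      = α * (∑ x, r x ^ (α-1) * ta x) - (α-1) * ∑ x, r x ^ α * tb x := by
        rw [Finset.mul_sum, Finset.mul_sum, ← Finset.sum_sub_distrib]
        exact Finset.sum_congr rfl fun x _ => e x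
    _ ≤ α * (∑ x, r x ^ (α-1) * a x) - (α-1) * ∑ x, r x ^ α * b x := by
        have k1 := mul_le_mul_of_nonneg_left h1 hα0
        have k2 := mul_le_mul_of_nonneg_left h2 (by linarith : (0:ℝ) ≤ α - 1)
        linarith
    _ = ∑ x, (α * (r x ^ (α-1) * a x) - (α-1) * (r x ^ α * b x)) := by
        rw [Finset.sum_sub_distrib, ← Finset.mul_sum, ← Finset.mul_sum]
    _ ≤ ∑ x, a x ^ α * b x ^ (1-α) := Finset.sum_le_sum fun x _ => by
        have := wf_tangent (a := a x) (b := b x) (r := r x) hα (ha x) (hb x) (hr x) (hab x)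
        calc α * (r x ^ (α-1) * a x) - (α-1) * (r x ^ α * b x)
            = α * r x ^ (α-1) * a x - (α-1) * r x ^ α * b x := by ring
          _ ≤ a x ^ α * b x ^ (1-α) := this

lemma wf_key {X : Type*} [Fintype X] {α δ : ℝ} (hα : 1 < α) (hδ0 : 0 < δ) (hδ1 : δ < 1)
    {P Q : X → ℝ≥0∞} (hP : IsPMF P) (hQ : IsPMF Q)
    {lP lQ : ℝ≥0∞} (hlP : 1 < lP) (hlQ0 : 0 < lQ) (hlQ1 : lQ ≤ 1)
    (hPt : ∑ x, min (P x) (lP * Q x) = ENNReal.ofReal (1 - δ))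
    (hQt : ∑ x, min (Q x) (min (P x) (lP * Q x) / lQ) = ENNReal.ofReal (1 - δ))
    {P' Q' : X → ℝ≥0∞} (hP'1 : IsPMF P') (hQ'1 : IsPMF Q')
    (hA : ∀ x, ENNReal.ofReal (1-δ) * P' x ≤ P x)
    (hB : ∀ x, ENNReal.ofReal (1-δ) * Q' x ≤ Q x) :
    ∑ x, (min (P x) (lP * Q x) / ENNReal.ofReal (1-δ)) ^ α
        * (min (Q x) (min (P x) (lP * Q x) / lQ) / ENNReal.ofReal (1-δ)) ^ (1-α)
      ≤ ∑ x, P' x ^ α * Q' x ^ (1-α) := by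
  set c : ℝ≥0∞ := ENNReal.ofReal (1-δ) with hcdef
  set Pt : X → ℝ≥0∞ := fun x => min (P x) (lP * Q x) with hPtdef
  set Qt : X → ℝ≥0∞ := fun x => min (Q x) (Pt x / lQ) with hQtdef
  have hd1 : (0:ℝ) < 1 - δ := by linarith
  have hc0 : c ≠ 0 := (ENNReal.ofReal_pos.mpr hd1).ne'
  have hcT : c ≠ ⊤ := ENNReal.ofReal_ne_top
  have hcR : c.toReal = 1 - δ := ENNReal.toReal_ofReal hd1.le
  have hlQT : lQ ≠ ⊤ := ne_top_of_le_ne_top ENNReal.one_ne_top hlQ1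
  have hlP0 : lP ≠ 0 := (lt_trans zero_lt_one hlP).ne'
  have hPfin : ∀ x, P x ≠ ⊤ := pmf_fin hP
  have hQfin : ∀ x, Q x ≠ ⊤ := pmf_fin hQ
  have hP'fin : ∀ x, P' x ≠ ⊤ := pmf_fin hP'1
  have hQ'fin : ∀ x, Q' x ≠ ⊤ := pmf_fin hQ'1
  have hPtle : ∀ x, Pt x ≤ P x := fun x => min_le_left _ _
  have hQtle : ∀ x, Qt x ≤ Q x := fun x => min_le_left _ _
  have hPtfin : ∀ x, Pt x ≠ ⊤ := fun x => ne_top_of_le_ne_top (hPfin x) (hPtle x)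
  have hQtfin : ∀ x, Qt x ≠ ⊤ := fun x => ne_top_of_le_ne_top (hQfin x) (hQtle x)
  -- Qt x = 0 → Pt x = 0
  have hQt0 : ∀ x, Qt x = 0 → Pt x = 0 := by
    intro x h
    rcases min_eq_iff.mp h with ⟨hq, _⟩ | ⟨hq, _⟩
    · exact le_zero_iff.mp (le_trans (min_le_right _ _) (by rw [hq, mul_zero]))
    · rcases ENNReal.div_eq_zero_iff.mp hq with h' | h'
      · exact h'
      · exact absurd h' hlQT
  -- Pt ≤ lP * Qt
  have hPtleLQ : ∀ x, Pt x ≤ lP * Qt x := by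
    intro x
    rcases min_cases (Q x) (Pt x / lQ) with ⟨h, _⟩ | ⟨h, _⟩
    · rw [hQtdef]; simp only []; rw [h]
      exact min_le_right _ _
    · rw [hQtdef]; simp only []; rw [h]
      have h1 : Pt x ≤ Pt x / lQ := by
        rw [ENNReal.le_div_iff_mul_le (Or.inl hlQ0.ne') (Or.inl hlQT)]
        exact mul_le_of_le_one_right' hlQ1
      exact le_trans h1 (le_mul_of_one_le_left' hlP.le)
  -- lQ * Qt ≤ Pt
  have hlQPt : ∀ x, lQ * Qt x ≤ Pt x := by
    intro x
    calc lQ * Qt x ≤ lQ * (Pt x / lQ) := mul_le_mul_right (min_le_right _ _) _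
      _ = Pt x := ENNReal.mul_div_cancel hlQ0.ne' hlQT
  by_cases hS1 : ∑ x, P' x ^ α * Q' x ^ (1-α) = ⊤
  · rw [hS1]; exact le_top
  have hterms1 : ∀ x, P' x ^ α * Q' x ^ (1-α) ≠ ⊤ := fun x h =>
    hS1 (ENNReal.sum_eq_top.mpr ⟨x, Finset.mem_univ x, h⟩)
  have habs : ∀ x, Q' x = 0 → P' x = 0 := by
    intro x hq
    by_contra hp
    apply hterms1 x
    have hne : P' x ^ α ≠ 0 := fun h => by
      rcases ENNReal.rpow_eq_zero_iff.mp h with ⟨h1, _⟩ | ⟨h1, _⟩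
      exacts [hp h1, hP'fin x h1]
    rw [hq, ENNReal.zero_rpow_of_neg (by linarith), ENNReal.mul_top hne]
  have hdivPfin : ∀ x, Pt x / c ≠ ⊤ := fun x => by
    simp [ENNReal.div_eq_top, hPtfin x, hc0]
  have hdivQfin : ∀ x, Qt x / c ≠ ⊤ := fun x => by
    simp [ENNReal.div_eq_top, hQtfin x, hc0]
  have hterm0fin : ∀ x, (Pt x / c) ^ α * (Qt x / c) ^ (1-α) ≠ ⊤ := by
    intro x
    by_cases hq : Qt x = 0
    · rw [hQt0 x hq, hq, ENNReal.zero_div, ENNReal.zero_rpow_of_pos (by linarith), zero_mul]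
      exact ENNReal.zero_ne_top
    · apply ENNReal.mul_ne_top
      · exact ENNReal.rpow_ne_top_of_nonneg (by linarith) (hdivPfin x)
      · intro h
        rcases ENNReal.rpow_eq_top_iff.mp h with ⟨h1, _⟩ | ⟨h1, _⟩
        · rcases ENNReal.div_eq_zero_iff.mp h1 with h2 | h2
          exacts [hq h2, hcT h2]
        · exact hdivQfin x h1
  have hS0fin : ∑ x, (Pt x / c) ^ α * (Qt x / c) ^ (1-α) ≠ ⊤ := by
    rw [Ne, ENNReal.sum_eq_top]
    push_neg
    exact fun x _ => hterm0fin x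
  -- pass to real numbers
  set a : X → ℝ := fun x => (P' x).toReal with hadef
  set b : X → ℝ := fun x => (Q' x).toReal with hbdef
  set ta : X → ℝ := fun x => (Pt x).toReal / (1-δ) with htadef
  set tb : X → ℝ := fun x => (Qt x).toReal / (1-δ) with htbdef
  set r : X → ℝ := fun x => (Pt x).toReal / (Qt x).toReal with hrdef
  have hsum_a : ∑ x, a x = 1 := by
    rw [hadef, ← ENNReal.toReal_sum (fun x _ => hP'fin x),
      (hP'1 : ∑ x, P' x = 1), ENNReal.toReal_one]
  have hsum_b : ∑ x, b x = 1 := by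
    rw [hbdef, ← ENNReal.toReal_sum (fun x _ => hQ'fin x),
      (hQ'1 : ∑ x, Q' x = 1), ENNReal.toReal_one]
  have hsum_ta : ∑ x, ta x = 1 := by
    rw [htadef, ← Finset.sum_div, ← ENNReal.toReal_sum (fun x _ => hPtfin x), hPt, hcdef,
      ENNReal.toReal_ofReal hd1.le, div_self hd1.ne']
  have hsum_tb : ∑ x, tb x = 1 := by
    rw [htbdef, ← Finset.sum_div, ← ENNReal.toReal_sum (fun x _ => hQtfin x), hQt, hcdef,
      ENNReal.toReal_ofReal hd1.le, div_self hd1.ne']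
  have hQttoReal0 : ∀ x, (Qt x).toReal = 0 → Qt x = 0 := by
    intro x h
    rcases (ENNReal.toReal_eq_zero_iff _).mp h with h' | h'
    exacts [h', absurd h' (hQtfin x)]
  -- claim (v)
  have hM0 : 0 < lQ.toReal := ENNReal.toReal_pos hlQ0.ne' hlQT
  have h2 : ∑ x, r x ^ α * b x ≤ ∑ x, r x ^ α * tb x := by
    have point : ∀ x, lQ.toReal ^ α * (tb x - b x) ≤ r x ^ α * (tb x - b x) := by
      intro x
      rcases le_or_gt (b x) (tb x) with hcase | hcase
      · rcases eq_or_lt_of_le hcase with heq | hlt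
        · rw [← heq]; simp
        · have htbpos : 0 < tb x := lt_of_le_of_lt ENNReal.toReal_nonneg hlt
          have hQtr : 0 < (Qt x).toReal := by
            by_contra h
            push_neg at h
            have : (Qt x).toReal = 0 := le_antisymm h ENNReal.toReal_nonneg
            rw [htbdef] at htbpos
            simp only [this, zero_div] at htbpos
            exact lt_irrefl _ htbpos
          have hMle : lQ.toReal * (Qt x).toReal ≤ (Pt x).toReal := by
            have := ENNReal.toReal_mono (hPtfin x) (hlQPt x)
            rwa [ENNReal.toReal_mul] at this
          have hrge : lQ.toReal ≤ r x := by
            rw [hrdef]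
            exact (le_div_iff₀ hQtr).mpr hMle
          exact mul_le_mul_of_nonneg_right
            (Real.rpow_le_rpow hM0.le hrge (by linarith)) (by linarith)
      · by_cases hq : (Qt x).toReal = 0
        · have : r x = 0 := by rw [hrdef]; simp [hq]
          rw [this, Real.zero_rpow (ne_of_gt (by linarith : (0:ℝ) < α)), zero_mul]
          exact mul_nonpos_of_nonneg_of_nonpos (Real.rpow_nonneg hM0.le α) (by linarith)
        · have hQtlt : (Qt x).toReal < (Q x).toReal := by
            have h1 : (1-δ) * (Q' x).toReal ≤ (Q x).toReal := by
              have := ENNReal.toReal_mono (hQfin x) (hB x)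
              rwa [ENNReal.toReal_mul, hcdef, ENNReal.toReal_ofReal hd1.le] at this
            rw [htbdef, hbdef] at hcase
            have := (div_lt_iff₀ hd1).mp hcase
            nlinarith [ENNReal.toReal_nonneg (a := Q' x)]
          have hQtne : Qt x ≠ Q x := fun h => by rw [h] at hQtlt; exact lt_irrefl _ hQtlt
          have hQteq : Qt x = Pt x / lQ := by
            rcases min_cases (Q x) (Pt x / lQ) with ⟨h, _⟩ | ⟨h, _⟩
            · exact absurd h hQtne
            · exact h
          have hPteq : lQ * Qt x = Pt x := by
            rw [hQteq]
            exact ENNReal.mul_div_cancel hlQ0.ne' hlQT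
          have hre : r x = lQ.toReal := by
            have hpm : (Pt x).toReal = lQ.toReal * (Qt x).toReal := by
              rw [← hPteq, ENNReal.toReal_mul]
            show (Pt x).toReal / (Qt x).toReal = lQ.toReal
            rw [hpm, mul_div_assoc, div_self hq, mul_one]
          rw [hre]
    have e : ∑ x, lQ.toReal ^ α * (tb x - b x) = 0 := by
      simp only [mul_sub]
      rw [Finset.sum_sub_distrib, ← Finset.mul_sum, ← Finset.mul_sum, hsum_tb, hsum_b, sub_self]
    have epos : (0:ℝ) ≤ ∑ x, r x ^ α * (tb x - b x) := by
      rw [← e]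
      exact Finset.sum_le_sum fun x _ => point x
    rw [← sub_nonneg, ← Finset.sum_sub_distrib]
    calc (0:ℝ) ≤ ∑ x, r x ^ α * (tb x - b x) := epos
      _ = ∑ x, (r x ^ α * tb x - r x ^ α * b x) := Finset.sum_congr rfl fun x _ => by ring
  -- claim (iv)
  have hP'le : ∀ x, (1-δ) * (P' x).toReal ≤ (P x).toReal := by
    intro x
    have := ENNReal.toReal_mono (hPfin x) (hA x)
    rwa [ENNReal.toReal_mul, hcdef, ENNReal.toReal_ofReal hd1.le] at this
  have h1 : ∑ x, r x ^ (α-1) * ta x ≤ ∑ x, r x ^ (α-1) * a x := by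
    by_cases hlPT : lP = ⊤
    · have hle : ∀ x ∈ Finset.univ, a x ≤ ta x := by
        intro x _
        by_cases hQx : Q x = 0
        · have hQ'0 : Q' x = 0 := by
            have h' := hB x
            rw [hQx, le_zero_iff, mul_eq_zero] at h'
            rcases h' with h' | h'
            exacts [absurd h' hc0, h']
          have : a x = 0 := by
            show (P' x).toReal = 0
            rw [habs x hQ'0, ENNReal.toReal_zero]
          rw [this]
          show (0:ℝ) ≤ (Pt x).toReal / (1-δ)
          positivity
        · have hPt_eq : Pt x = P x := by
            show min (P x) (lP * Q x) = P x
            rw [hlPT, ENNReal.top_mul hQx]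
            exact min_eq_left le_top
          show (P' x).toReal ≤ (Pt x).toReal / (1-δ)
          rw [hPt_eq, le_div_iff₀ hd1]
          linarith [hP'le x]
      have heq : ∀ x ∈ Finset.univ, a x = ta x :=
        (Finset.sum_eq_sum_iff_of_le hle).mp (by rw [hsum_a, hsum_ta])
      exact le_of_eq (Finset.sum_congr rfl fun x hx => by rw [heq x hx])
    · set L := lP.toReal with hLdef
      have hL0 : 0 < L := ENNReal.toReal_pos hlP0 hlPT
      have point : ∀ x, L ^ (α-1) * (a x - ta x) ≤ r x ^ (α-1) * (a x - ta x) := by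
        intro x
        rcases le_or_gt (a x) (ta x) with hcase | hcase
        · have hrle : r x ≤ L := by
            by_cases hq : (Qt x).toReal = 0
            · show (Pt x).toReal / (Qt x).toReal ≤ L
              rw [hq, div_zero]
              exact hL0.le
            · have hq' : 0 < (Qt x).toReal :=
                lt_of_le_of_ne ENNReal.toReal_nonneg (Ne.symm hq)
              have hkey : (Pt x).toReal ≤ L * (Qt x).toReal := by
                have := ENNReal.toReal_mono (ENNReal.mul_ne_top hlPT (hQtfin x)) (hPtleLQ x)
                rwa [ENNReal.toReal_mul] at this
              show (Pt x).toReal / (Qt x).toReal ≤ L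
              rw [div_le_iff₀ hq']
              linarith
          exact mul_le_mul_of_nonpos_right
            (Real.rpow_le_rpow (div_nonneg ENNReal.toReal_nonneg ENNReal.toReal_nonneg)
              hrle (by linarith)) (by linarith)
        · have hta0 : (0:ℝ) ≤ ta x := div_nonneg ENNReal.toReal_nonneg hd1.le
          have hax : 0 < a x := lt_of_le_of_lt hta0 hcase
          have hQx : Q x ≠ 0 := by
            intro h
            have hQ'0 : Q' x = 0 := by
              have h' := hB x
              rw [h, le_zero_iff, mul_eq_zero] at h'
              rcases h' with h' | h'
              exacts [absurd h' hc0, h']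
            have : a x = 0 := by
              show (P' x).toReal = 0
              rw [habs x hQ'0, ENNReal.toReal_zero]
            linarith
          have hcase' : (Pt x).toReal / (1-δ) < (P' x).toReal := hcase
          have hPtlt : (Pt x).toReal < (P x).toReal := by
            have := (div_lt_iff₀ hd1).mp hcase'
            nlinarith [hP'le x]
          have hPtneP : Pt x ≠ P x := fun h => by rw [h] at hPtlt; exact lt_irrefl _ hPtlt
          have hPteq : Pt x = lP * Q x := by
            rcases min_cases (P x) (lP * Q x) with ⟨h, _⟩ | ⟨h, _⟩
            exacts [absurd h hPtneP, h]
          have hQteqQ : Qt x = Q x := by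
            show min (Q x) (Pt x / lQ) = Q x
            apply min_eq_left
            rw [ENNReal.le_div_iff_mul_le (Or.inl hlQ0.ne') (Or.inl hlQT), hPteq]
            calc Q x * lQ ≤ Q x * 1 := mul_le_mul_right hlQ1 _
              _ = Q x := mul_one _
              _ ≤ lP * Q x := le_mul_of_one_le_left' hlP.le
          have hQr : 0 < (Q x).toReal := ENNReal.toReal_pos hQx (hQfin x)
          have hre : r x = L := by
            show (Pt x).toReal / (Qt x).toReal = L
            rw [hQteqQ, hPteq, ENNReal.toReal_mul, mul_div_assoc, div_self hQr.ne', mul_one]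
          rw [hre]
      have e : ∑ x, L ^ (α-1) * (a x - ta x) = 0 := by
        simp only [mul_sub]
        rw [Finset.sum_sub_distrib, ← Finset.mul_sum, ← Finset.mul_sum, hsum_a, hsum_ta, sub_self]
      have epos : (0:ℝ) ≤ ∑ x, r x ^ (α-1) * (a x - ta x) := by
        rw [← e]
        exact Finset.sum_le_sum fun x _ => point x
      rw [← sub_nonneg, ← Finset.sum_sub_distrib]
      calc (0:ℝ) ≤ ∑ x, r x ^ (α-1) * (a x - ta x) := epos
        _ = ∑ x, (r x ^ (α-1) * a x - r x ^ (α-1) * ta x) := Finset.sum_congr rfl fun x _ => by ring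
  -- assemble
  have hab : ∀ x, b x = 0 → a x = 0 := by
    intro x hbx
    have hq : Q' x = 0 := by
      rcases (ENNReal.toReal_eq_zero_iff _).mp hbx with h | h
      exacts [h, absurd h (hQ'fin x)]
    show (P' x).toReal = 0
    rw [habs x hq, ENNReal.toReal_zero]
  have hta : ∀ x, ta x = r x * tb x := by
    intro x
    by_cases hq : (Qt x).toReal = 0
    · have hq' : Qt x = 0 := hQttoReal0 x hq
      have hp' : Pt x = 0 := hQt0 x hq'
      show (Pt x).toReal / (1-δ) = (Pt x).toReal / (Qt x).toReal * ((Qt x).toReal / (1-δ))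
      rw [hp', hq']
      simp
    · show (Pt x).toReal / (1-δ) = (Pt x).toReal / (Qt x).toReal * ((Qt x).toReal / (1-δ))
      field_simp
  have hwf := wf_sum hα a b ta tb r (fun x => ENNReal.toReal_nonneg)
    (fun x => ENNReal.toReal_nonneg) (fun x => div_nonneg ENNReal.toReal_nonneg hd1.le)
    (fun x => div_nonneg ENNReal.toReal_nonneg ENNReal.toReal_nonneg) hab hta h1 h2
  rw [← ENNReal.toReal_le_toReal hS0fin hS1, ENNReal.toReal_sum (fun x _ => hterm0fin x),
    ENNReal.toReal_sum (fun x _ => hterms1 x)]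
  have e0 : ∀ x, ((Pt x / c) ^ α * (Qt x / c) ^ (1-α)).toReal = ta x ^ α * tb x ^ (1-α) := by
    intro x
    rw [ENNReal.toReal_mul, ← ENNReal.toReal_rpow, ← ENNReal.toReal_rpow,
      ENNReal.toReal_div, ENNReal.toReal_div, hcR]
  have e1 : ∀ x, (P' x ^ α * Q' x ^ (1-α)).toReal = a x ^ α * b x ^ (1-α) := fun x => by
    rw [ENNReal.toReal_mul, ← ENNReal.toReal_rpow, ← ENNReal.toReal_rpow]
  calc ∑ x, ((Pt x / c) ^ α * (Qt x / c) ^ (1-α)).toReal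
      = ∑ x, ta x ^ α * tb x ^ (1-α) := Finset.sum_congr rfl fun x _ => e0 x
    _ ≤ ∑ x, a x ^ α * b x ^ (1-α) := hwf
    _ = ∑ x, (P' x ^ α * Q' x ^ (1-α)).toReal := Finset.sum_congr rfl fun x _ => (e1 x).symm


/-- Correctness of the water-filling algorithm: the clipped pair
(P̃/(1−δ), Q̃/(1−δ)) attains the infimum in the definition of D_α^δ(P‖Q). -/
theorem stmt13 {X : Type*} [Fintype X] (α δ : ℝ) (hα : 1 < α)
    (hδ : δ ∈ Set.Ioo (0:ℝ) 1) (P Q : X → ℝ≥0∞) (hP : IsPMF P) (hQ : IsPMF Q)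
    (hTV : ∑ x, min (P x) (Q x) < ENNReal.ofReal (1 - δ))
    (lP lQ : ℝ≥0∞) (hlP : 1 < lP) (hlQ0 : 0 < lQ) (hlQ1 : lQ ≤ 1)
    (hPt : ∑ x, min (P x) (lP * Q x) = ENNReal.ofReal (1 - δ))
    (hQt : ∑ x, min (Q x) (min (P x) (lP * Q x) / lQ) = ENNReal.ofReal (1 - δ)) :
    approxRenyiDiv α δ P Q =
      renyiDiv α
        (fun x => min (P x) (lP * Q x) / ENNReal.ofReal (1 - δ))
        (fun x => min (Q x) (min (P x) (lP * Q x) / lQ) / ENNReal.ofReal (1 - δ)) := by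
  obtain ⟨hδ0, hδ1⟩ := hδ
  obtain ⟨hpmf1, hpmf2, hdec1⟩ := wf_decomp ⟨hδ0, hδ1⟩ hP
    (fun x => min (P x) (lP * Q x)) (fun x => min_le_left _ _) hPt
  obtain ⟨hpmf3, hpmf4, hdec2⟩ := wf_decomp ⟨hδ0, hδ1⟩ hQ
    (fun x => min (Q x) (min (P x) (lP * Q x) / lQ)) (fun x => min_le_left _ _) hQt
  unfold approxRenyiDiv
  apply le_antisymm
  · apply sInf_le
    exact ⟨_, _, _, _, hpmf1, hpmf2, hpmf3, hpmf4, hdec1, hdec2, rfl⟩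
  · apply le_sInf
    rintro d ⟨P', P'', Q', Q'', hP'1, hP''1, hQ'1, hQ''1, hPdec, hQdec, rfl⟩
    apply renyiDiv_mono hα
    apply wf_key hα hδ0 hδ1 hP hQ hlP hlQ0 hlQ1 hPt hQt hP'1 hQ'1
    · intro x
      rw [hPdec x]
      exact self_le_add_right _ _
    · intro x
      rw [hQdec x]
      exact self_le_add_right _ _
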